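/- Let X = ⋃_{k≥1} (A_k ∪ B_{k+1}) ⊆ ℝ², where A_k = [k,∞) × {k} and B_k = {k} × [k−1,k], let d_e be the Euclidean metric on X and d the path metric on X. Then the countable collection {A_k}_{k≥1} is gradually disjoint in (X,d), while in (X,d_e) the collection {A_k}_{k≥1} does not diverge, i.e., no finite subcollection of {A_k}_{k≥1} diverges in (X,d_e). -/

import Mathlib

open Metric Bornology Function Set

/-- A map between metric spaces is (coarsely) proper if preimages of bounded
sets are bounded. -/
def MetricallyProper {X Y : Type*} [MetricSpace X] [MetricSpace Y] (f : X → Y) : Prop :=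
  ∀ B : Set Y, IsBounded B → IsBounded (f ⁻¹' B)

/-- A coarse map: proper, and uniformly bornologous. -/
def CoarseMap {X Y : Type*} [MetricSpace X] [MetricSpace Y] (f : X → Y) : Prop :=
  MetricallyProper f ∧
    ∀ R > (0:ℝ), ∃ S > (0:ℝ), ∀ x x' : X, dist x x' ≤ R → dist (f x) (f x') ≤ S

/-- Coarsely surjective map. -/
def CoarselySurjective {X Y : Type*} [MetricSpace X] [MetricSpace Y] (f : X → Y) : Prop :=
  ∃ R > (0:ℝ), ∀ y : Y, ∃ x : X, dist y (f x) ≤ R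

/-- `f` is coarsely `n`-to-1. -/
def CoarselyNTo1 {X Y : Type*} [MetricSpace X] [MetricSpace Y] (f : X → Y) (n : ℕ) : Prop :=
  ∀ R > (0:ℝ), ∃ S > (0:ℝ), ∀ A : Set Y, (∀ y ∈ A, ∀ y' ∈ A, dist y y' ≤ R) →
    ∃ V : Fin n → Set X, (∀ i, ∀ x ∈ V i, ∀ x' ∈ V i, dist x x' ≤ S) ∧ f ⁻¹' A ⊆ ⋃ i, V i

/-- `f` is coarsely finite-to-1. -/
def CoarselyFiniteTo1 {X Y : Type*} [MetricSpace X] [MetricSpace Y] (f : X → Y) : Prop :=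
  ∀ R > (0:ℝ), ∃ S > (0:ℝ), ∃ m : ℕ, ∀ A : Set Y, (∀ y ∈ A, ∀ y' ∈ A, dist y y' ≤ R) →
    ∃ V : Fin m → Set X, (∀ i, ∀ x ∈ V i, ∀ x' ∈ V i, dist x x' ≤ S) ∧ f ⁻¹' A ⊆ ⋃ i, V i

/-- Two maps are close. -/
def Close {X Y : Type*} [MetricSpace X] [MetricSpace Y] (f g : X → Y) : Prop :=
  ∃ R > (0:ℝ), ∀ x : X, dist (f x) (g x) ≤ R

/-- `f` is a coarse equivalence. -/
def CoarseEquivalence {X Y : Type*} [MetricSpace X] [MetricSpace Y] (f : X → Y) : Prop :=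
  CoarseMap f ∧ ∃ g : Y → X, CoarseMap g ∧ Close (f ∘ g) id ∧ Close (g ∘ f) id

/-- `X` and `Y` are coarsely equivalent. -/
def CoarselyEquivalent (X Y : Type*) [MetricSpace X] [MetricSpace Y] : Prop :=
  ∃ f : X → Y, CoarseEquivalence f

/-- A family of subsets is uniformly bounded. -/
def UnifBounded {X : Type*} [MetricSpace X] (𝒰 : Set (Set X)) : Prop :=
  ∃ S : ℝ, ∀ U ∈ 𝒰, ∀ x ∈ U, ∀ y ∈ U, dist x y ≤ S

/-- A family of subsets is `R`-disjoint: distinct members lie at distance `> R`. -/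
def RDisjointFam {X : Type*} [MetricSpace X] (𝒰 : Set (Set X)) (R : ℝ) : Prop :=
  ∀ U ∈ 𝒰, ∀ V ∈ 𝒰, U ≠ V → ∀ x ∈ U, ∀ y ∈ V, R < dist x y

/-- `asdim X ≤ n`. -/
def ASDimLE (X : Type*) [MetricSpace X] (n : ℕ) : Prop :=
  ∀ R > (0:ℝ), ∃ 𝒰 : Fin (n + 1) → Set (Set X),
    (∀ i, UnifBounded (𝒰 i)) ∧ (∀ i, RDisjointFam (𝒰 i) R) ∧
      ∀ x : X, ∃ i, ∃ U ∈ 𝒰 i, x ∈ U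

/-- The asymptotic dimension of `X`, valued in `ℕ∞`. -/
noncomputable def asdim (X : Type*) [MetricSpace X] : ℕ∞ :=
  sInf {n : ℕ∞ | ∃ m : ℕ, n = (m : ℕ∞) ∧ ASDimLE X m}

/-- TI-increasing functions `[0,∞) → [0,∞)`. -/
def TIIncreasing (ρ : NNReal → NNReal) : Prop :=
  Monotone ρ ∧ Filter.Tendsto ρ Filter.atTop Filter.atTop

/-- The variable-radius neighborhood `N(A, ρ)` with respect to a basepoint `x₀`. -/
def GrowNbhd {X : Type*} [MetricSpace X] (x₀ : X) (A : Set X) (ρ : NNReal → NNReal) : Set X :=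
  {x' | ∃ x ∈ A, nndist x' x ≤ ρ (nndist x x₀)}

/-- `f` is coarsely open (with respect to basepoints `x₀`, `y₀`). -/
def CoarselyOpen {X Y : Type*} [MetricSpace X] [MetricSpace Y] (f : X → Y)
    (x₀ : X) (y₀ : Y) : Prop :=
  ∀ A : Set X, ¬ IsBounded A → ∀ ρ : NNReal → NNReal, TIIncreasing ρ →
    ∃ ρ' : NNReal → NNReal, TIIncreasing ρ' ∧
      GrowNbhd y₀ (f '' A) ρ' ⊆ f '' GrowNbhd x₀ A ρ

/-- `N(A, R)`, the closed `R`-neighborhood of `A`. -/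
def NbhdR {X : Type*} [MetricSpace X] (A : Set X) (R : ℝ) : Set X :=
  {x | ∃ a ∈ A, dist x a ≤ R}

/-- A finite collection of subsets is gradually disjoint. -/
def GraduallyDisjoint {X : Type*} [MetricSpace X] {k : ℕ} (A : Fin k → Set X) : Prop :=
  ∀ R > (0:ℝ), ∃ B : Set X, IsBounded B ∧
    ∀ i j, i ≠ j → Disjoint (NbhdR (A i) R \ B) (NbhdR (A j) R \ B)

/-- A finite collection of subsets diverges. -/
def Diverges {X : Type*} [MetricSpace X] {k : ℕ} (A : Fin k → Set X) : Prop :=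
  ∀ R > (0:ℝ), IsBounded (⋂ i, NbhdR (A i) R)

/-- A countable collection of subsets is gradually disjoint: every finite
subcollection is. -/
def GraduallyDisjointSeq {X : Type*} [MetricSpace X] (A : ℕ → Set X) : Prop :=
  ∀ s : Finset ℕ, ∀ R > (0:ℝ), ∃ B : Set X, IsBounded B ∧
    ∀ i ∈ s, ∀ j ∈ s, i ≠ j → Disjoint (NbhdR (A i) R \ B) (NbhdR (A j) R \ B)

/-- A countable collection of subsets diverges: some finite subcollection diverges. -/
def DivergesSeq {X : Type*} [MetricSpace X] (A : ℕ → Set X) : Prop :=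
  ∃ s : Finset ℕ, ∀ R > (0:ℝ), IsBounded (⋂ i ∈ s, NbhdR (A i) R)

/-- A complex-valued function on a metric space is slowly oscillating. -/
def SlowlyOscillating {X : Type*} [MetricSpace X] (φ : X → ℂ) : Prop :=
  ∀ R > (0:ℝ), ∀ ε > (0:ℝ), ∃ A : Set X, IsBounded A ∧
    ∀ x : X, ∀ p ∈ closedBall x R \ A, ∀ p' ∈ closedBall x R \ A, dist (φ p) (φ p') ≤ ε
/-- The horizontal ray `A_k = [k,∞) × {k}`, inside `ℂ ≅ ℝ²`. -/
def Aray (k : ℕ) : Set ℂ := {z | z.im = (k:ℝ) ∧ (k:ℝ) ≤ z.re}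

/-- The vertical segment `B_k = {k} × [k-1,k]`, inside `ℂ ≅ ℝ²`. -/
def Bseg (k : ℕ) : Set ℂ := {z | z.re = (k:ℝ) ∧ (k:ℝ) - 1 ≤ z.im ∧ z.im ≤ (k:ℝ)}

/-- The tree `X = ⋃_{k ≥ 1} (A_k ∪ B_{k+1}) ⊆ ℝ²`. -/
def Xtree : Set ℂ := ⋃ k ∈ {k : ℕ | 1 ≤ k}, (Aray k ∪ Bseg (k + 1))

/-- The Euclidean length of a path in `X ⊆ ℝ² = ℂ`, i.e. its total variation. -/
noncomputable def pathLength {p q : Xtree} (γ : Path p q) : ENNReal :=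
  eVariationOn (fun t => ((γ t : Xtree) : ℂ)) Set.univ

/-- The path metric on `X`: the infimum of the Euclidean lengths of continuous
paths in `X` joining two given points (`∞` if there is none). -/
noncomputable def treePathDist (p q : Xtree) : ENNReal :=
  ⨅ γ : Path p q, pathLength γ

/-- The ray `A_k`, as a subset of the tree `X` (with its Euclidean metric). -/
def ArayX (k : ℕ) : Set Xtree := Subtype.val ⁻¹' Aray k

/-!
In the path metric, a path from the ray `A_m` to any higher ray must pass through the segment
`B_{m+1}`, hence through the point `(m + 1, m + 1/2)`; so a point of `A_m` within `2R` of a higher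
ray has real part at most `m + 1 + 2R`. Since reaching `A_m` from `(1, 1)` costs at most `2m` plus
the horizontal distance, the `R`-neighbourhoods of finitely many rays meet only in a ball.
In the Euclidean metric, on the other hand, the highest ray `A_K` of a finite subcollection lies
within distance `K` of every other ray, so all their `K`-neighbourhoods contain the unbounded `A_K`.
-/

open scoped unitInterval Convex

theorem convex_aray (k : ℕ) : Convex ℝ (Aray k) :=
  ((convex_singleton _).linear_preimage Complex.imLm).inter
    ((convex_Ici _).linear_preimage Complex.reLm)

theorem convex_bseg (k : ℕ) : Convex ℝ (Bseg k) :=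
  ((convex_singleton _).linear_preimage Complex.reLm).inter
    ((convex_Icc _ _).linear_preimage Complex.imLm)

theorem aray_subset_xtree {k : ℕ} (hk : 1 ≤ k) : Aray k ⊆ Xtree :=
  fun _ hz => mem_biUnion (show k ∈ {k : ℕ | 1 ≤ k} from hk) (Or.inl hz)

theorem bseg_succ_subset_xtree {k : ℕ} (hk : 1 ≤ k) : Bseg (k + 1) ⊆ Xtree :=
  fun _ hz => mem_biUnion (show k ∈ {k : ℕ | 1 ≤ k} from hk) (Or.inr hz)

theorem re_eq_of_mem_xtree {z : ℂ} (hz : z ∈ Xtree) {m : ℕ} (him : z.im ∈ Ioo (m : ℝ) (m + 1)) :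
    z.re = m + 1 := by
  simp only [Xtree, mem_iUnion, mem_union] at hz
  obtain ⟨k, -, ⟨hk, -⟩ | ⟨hre, hlo, hhi⟩⟩ := hz
  · rw [hk] at him
    have h₁ : m < k := by exact_mod_cast him.1
    have h₂ : k < m + 1 := by exact_mod_cast him.2
    omega
  · push_cast at hre hlo hhi
    have h₁ : m < k + 1 := by exact_mod_cast him.1.trans_le hhi
    have h₂ : k < m + 1 := by exact_mod_cast (by linarith [him.2] : (k : ℝ) < m + 1)
    rw [hre, show k = m by omega]

theorem treePathDist_le_edist {p q : Xtree} (h : [(p : ℂ) -[ℝ] q] ⊆ Xtree) :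
    treePathDist p q ≤ edist p q := by
  let γ : Path p q :=
    { toFun := fun t =>
        ⟨Path.segment (p : ℂ) q t, h (Path.range_segment (p : ℂ) q ▸ mem_range_self t)⟩
      continuous_toFun := (Path.segment (p : ℂ) q).continuous.subtype_mk _
      source' := Subtype.ext (Path.segment (p : ℂ) q).source
      target' := Subtype.ext (Path.segment (p : ℂ) q).target }
  have hvar : eVariationOn ((↑) : I → ℝ) univ ≤ 1 := by
    have hmono : MonotoneOn ((↑) : I → ℝ) univ := fun _ _ _ _ h => h
    simpa [← unitInterval.univ_eq_Icc] using (hmono.eVariationOn_eq (mem_univ 0) (mem_univ 1)).le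
  calc treePathDist p q ≤ pathLength γ := iInf_le _ γ
    _ = eVariationOn (AffineMap.lineMap (p : ℂ) q ∘ ((↑) : I → ℝ)) univ := rfl
    _ ≤ nndist (p : ℂ) q * eVariationOn ((↑) : I → ℝ) univ :=
      (lipschitzWith_lineMap (p : ℂ) q).lipschitzOnWith.comp_eVariationOn_le (mapsTo_univ _ _)
    _ ≤ edist p q := by
      grw [hvar, mul_one]
      rfl

/-- A path from height `≤ m` to height `≥ m + 1` crosses height `m + 1/2`, which the tree meets
only on `B_{m+1}`. -/
theorem ofReal_re_sub_le_treePathDist {z w : Xtree} {m : ℕ} (hz : (z : ℂ).im ≤ m)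
    (hw : m + 1 ≤ (w : ℂ).im) : ENNReal.ofReal ((z : ℂ).re - (m + 1)) ≤ treePathDist z w := by
  refine le_iInf fun γ => ?_
  have hcont : Continuous fun t => ((γ t : Xtree) : ℂ).im := by fun_prop
  obtain ⟨t, ht⟩ : ∃ t, ((γ t : Xtree) : ℂ).im = m + 1 / 2 :=
    intermediate_value_univ 0 1 hcont ⟨by simp; linarith, by simp; linarith⟩
  have hre : ((γ t : Xtree) : ℂ).re = m + 1 :=
    re_eq_of_mem_xtree (γ t).2 (by rw [ht]; constructor <;> linarith)
  calc ENNReal.ofReal ((z : ℂ).re - (m + 1))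
      ≤ edist (z : ℂ) (γ t) := by
        rw [edist_dist, ← hre]
        refine ENNReal.ofReal_le_ofReal ((le_abs_self _).trans ?_)
        simpa [Complex.dist_eq] using Complex.abs_re_le_norm ((z : ℂ) - γ t)
    _ = edist ((γ 0 : Xtree) : ℂ) (γ t) := by simp
    _ ≤ pathLength γ := eVariationOn.edist_le _ (mem_univ 0) (mem_univ t)

section PathMetric

variable {T : Type*} [MetricSpace T] {e : T ≃ Xtree}

theorem dist_le_of_mem_convex
    (hd : ∀ p q : T, ENNReal.ofReal (dist p q) = treePathDist (e p) (e q))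
    {S : Set ℂ} (hS : Convex ℝ S) (hSX : S ⊆ Xtree) {p q : T} (hp : (e p : ℂ) ∈ S)
    (hq : (e q : ℂ) ∈ S) : dist p q ≤ dist (e p) (e q) := by
  rw [← ENNReal.ofReal_le_ofReal_iff dist_nonneg, hd, ← edist_dist]
  exact treePathDist_le_edist ((hS.segment_subset hp hq).trans hSX)

theorem re_sub_le_dist
    (hd : ∀ p q : T, ENNReal.ofReal (dist p q) = treePathDist (e p) (e q))
    {p q : T} {m : ℕ} (hp : (e p : ℂ).im ≤ m) (hq : m + 1 ≤ (e q : ℂ).im) :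
    (e p : ℂ).re - (m + 1) ≤ dist p q := by
  rw [← ENNReal.ofReal_le_ofReal_iff dist_nonneg, hd]
  exact ofReal_re_sub_le_treePathDist hp hq

/-- Going up one level costs two units: along `A_m` to `(m + 1, m)`, then up `B_{m + 1}`. -/
theorem dist_le_of_mem_aray
    (hd : ∀ p q : T, ENNReal.ofReal (dist p q) = treePathDist (e p) (e q))
    {t₀ : T} (ht₀ : (e t₀ : ℂ) = ⟨1, 1⟩) {m : ℕ} (hm : 1 ≤ m) {p : T} (hp : (e p : ℂ) ∈ Aray m) :
    dist t₀ p ≤ (e p : ℂ).re + m - 2 := by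
  induction m, hm using Nat.le_induction generalizing p with
  | base =>
    have h₀ : (e t₀ : ℂ) ∈ Aray 1 := by simp [ht₀, Aray]
    calc dist t₀ p ≤ dist (e t₀) (e p) :=
          dist_le_of_mem_convex hd (convex_aray 1) (aray_subset_xtree le_rfl) h₀ hp
      _ = (e p : ℂ).re + (1 : ℕ) - 2 := by
        rw [Subtype.dist_eq, Complex.dist_of_im_eq (by rw [hp.1, ht₀]; simp), ht₀,
          dist_comm, Real.dist_eq, abs_of_nonneg (by simpa using hp.2)]
        push_cast; ring
  | succ m hm ih =>
    set corner : ℂ := ⟨(m + 1 : ℕ), m⟩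
    have hcA : corner ∈ Aray m := ⟨rfl, by simp [corner]⟩
    have hcB : corner ∈ Bseg (m + 1) := ⟨rfl, by simp [corner], by simp [corner]⟩
    have htop : (⟨(m + 1 : ℕ), (m + 1 : ℕ)⟩ : ℂ) ∈ Bseg (m + 1) := ⟨rfl, by simp, le_rfl⟩
    set c : T := e.symm ⟨corner, aray_subset_xtree hm hcA⟩
    set r : T := e.symm ⟨_, bseg_succ_subset_xtree hm htop⟩
    have hc : (e c : ℂ) = corner := by simp [c]
    have hr : (e r : ℂ) = ⟨(m + 1 : ℕ), (m + 1 : ℕ)⟩ := by simp [r]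
    have hcr : dist c r ≤ 1 := by
      refine (dist_le_of_mem_convex hd (convex_bseg _) (bseg_succ_subset_xtree hm)
        (hc ▸ hcB) (hr ▸ htop)).trans_eq ?_
      rw [Subtype.dist_eq, hc, hr,
        Complex.dist_of_re_eq (z := corner) (w := ⟨(m + 1 : ℕ), (m + 1 : ℕ)⟩) rfl, Real.dist_eq]
      simp [corner]
    have hrp : dist r p ≤ (e p : ℂ).re - (m + 1 : ℕ) := by
      refine (dist_le_of_mem_convex hd (convex_aray _) (aray_subset_xtree (by omega))
        (hr ▸ ⟨rfl, le_rfl⟩) hp).trans_eq ?_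
      rw [Subtype.dist_eq, hr, Complex.dist_of_im_eq hp.1.symm, dist_comm, Real.dist_eq,
        abs_of_nonneg (sub_nonneg.2 hp.2)]
    have htc := ih (hc ▸ hcA)
    rw [hc] at htc
    calc dist t₀ p ≤ dist t₀ c + dist c r + dist r p := dist_triangle4 _ _ _ _
      _ ≤ ((m + 1 : ℕ) + m - 2) + 1 + ((e p : ℂ).re - (m + 1 : ℕ)) := by
        gcongr
      _ = (e p : ℂ).re + (m + 1 : ℕ) - 2 := by push_cast; ring

theorem nbhdR_inter_nbhdR_subset_closedBall
    (hd : ∀ p q : T, ENNReal.ofReal (dist p q) = treePathDist (e p) (e q))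
    {t₀ : T} (ht₀ : (e t₀ : ℂ) = ⟨1, 1⟩) {m m' : ℕ} (hm : 1 ≤ m) (hmm' : m < m') (R : ℝ) :
    NbhdR ((fun t : T => e t) ⁻¹' ArayX m) R ∩ NbhdR ((fun t : T => e t) ⁻¹' ArayX m') R ⊆
      closedBall t₀ (3 * R + 2 * m) := by
  rintro p ⟨⟨a, ha, hpa⟩, ⟨b, hb, hpb⟩⟩
  have ha : (e a : ℂ) ∈ Aray m := ha
  have hb : (m : ℝ) + 1 ≤ (e b : ℂ).im := by rw [hb.1]; exact_mod_cast hmm'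
  have hab : (e a : ℂ).re - (m + 1) ≤ 2 * R :=
    calc _ ≤ dist a b := re_sub_le_dist hd ha.1.le hb
      _ ≤ dist p a + dist p b := dist_triangle_left _ _ _
      _ ≤ 2 * R := by linarith
  have hta := dist_le_of_mem_aray hd ht₀ hm ha
  rw [mem_closedBall]
  linarith [dist_triangle p a t₀, dist_comm a t₀]

end PathMetric

theorem graduallyDisjointSeq_of_inter_subset {X : Type*} [MetricSpace X] {A : ℕ → Set X}
    (h : ∀ s : Finset ℕ, ∀ R > (0 : ℝ), ∃ B : Set X, IsBounded B ∧
      ∀ i ∈ s, ∀ j ∈ s, i < j → NbhdR (A i) R ∩ NbhdR (A j) R ⊆ B) :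
    GraduallyDisjointSeq A := by
  intro s R hR
  obtain ⟨B, hB, hsub⟩ := h s R hR
  have hlt : ∀ i ∈ s, ∀ j ∈ s, i < j → Disjoint (NbhdR (A i) R \ B) (NbhdR (A j) R \ B) :=
    fun i hi j hj hij => disjoint_left.2 fun x hxi hxj => hxi.2 (hsub i hi j hj hij ⟨hxi.1, hxj.1⟩)
  refine ⟨B, hB, fun i hi j hj hij => ?_⟩
  rcases hij.lt_or_gt with hij | hij
  exacts [hlt i hi j hj hij, (hlt j hj i hi hij).symm]

theorem nbhdR_mono {X : Type*} [MetricSpace X] (A : Set X) {R R' : ℝ} (h : R ≤ R') :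
    NbhdR A R ⊆ NbhdR A R' :=
  fun _ ⟨a, ha, hxa⟩ => ⟨a, ha, hxa.trans h⟩

theorem arayX_subset_nbhdR {i j : ℕ} (hi : 1 ≤ i) (hij : i ≤ j) :
    ArayX j ⊆ NbhdR (ArayX i) (j - i) := by
  intro z hz
  have hz : (z : ℂ) ∈ Aray j := hz
  have hij' : (i : ℝ) ≤ j := by exact_mod_cast hij
  have hmem : (⟨(z : ℂ).re, i⟩ : ℂ) ∈ Aray i := ⟨rfl, hij'.trans hz.2⟩
  refine ⟨⟨_, aray_subset_xtree hi hmem⟩, hmem, ?_⟩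
  show dist (z : ℂ) ⟨(z : ℂ).re, i⟩ ≤ _
  rw [Complex.dist_of_re_eq (z := z) (w := ⟨(z : ℂ).re, i⟩) rfl, hz.1, Real.dist_eq,
    abs_of_nonneg (by simpa)]

theorem not_isBounded_arayX {k : ℕ} (hk : 1 ≤ k) : ¬ IsBounded (ArayX k) := by
  intro h
  obtain ⟨C, hC⟩ := Metric.isBounded_iff.1 h
  have hmem : ∀ x : ℝ, k ≤ x → (⟨x, k⟩ : ℂ) ∈ Aray k := fun x hx => ⟨rfl, hx⟩
  have hfar : (k : ℝ) ≤ k + |C| + 1 := by linarith [abs_nonneg C]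
  have : dist (⟨k, k⟩ : ℂ) ⟨k + |C| + 1, k⟩ ≤ C :=
    hC (x := ⟨_, aray_subset_xtree hk (hmem k le_rfl)⟩)
      (y := ⟨_, aray_subset_xtree hk (hmem _ hfar)⟩) (hmem k le_rfl) (hmem _ hfar)
  rw [Complex.dist_of_im_eq (z := ⟨k, k⟩) (w := ⟨k + |C| + 1, k⟩) rfl, Real.dist_eq, abs_sub_comm,
    abs_of_nonneg (by linarith)] at this
  linarith [le_abs_self C]

/-- In the path metric `(X,d)` (realized as `T` via
`e : T ≃ X`), the countable collection `{A_k}_{k ≥ 1}` is gradually disjoint,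
while in the Euclidean metric `(X,d_e)` the collection `{A_k}_{k ≥ 1}` does not
diverge (no finite subcollection diverges). -/
theorem tree_rays_graduallyDisjoint_not_divergent (T : Type*) [MetricSpace T]
    (e : T ≃ Xtree)
    (hd : ∀ p q : T, ENNReal.ofReal (dist p q) = treePathDist (e p) (e q)) :
    GraduallyDisjointSeq (fun k : ℕ => (fun t : T => e t) ⁻¹' ArayX (k + 1)) ∧
      ¬ DivergesSeq (fun k : ℕ => ArayX (k + 1)) := by
  have hroot : (⟨1, 1⟩ : ℂ) ∈ Xtree := aray_subset_xtree le_rfl (by simp [Aray])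
  obtain ⟨t₀, ht₀⟩ : ∃ t₀ : T, (e t₀ : ℂ) = ⟨1, 1⟩ := ⟨e.symm ⟨_, hroot⟩, by simp⟩
  constructor
  · refine graduallyDisjointSeq_of_inter_subset fun s R _ =>
      ⟨closedBall t₀ (3 * R + 2 * (s.sup id + 1)), isBounded_closedBall, fun i hi j _ hij => ?_⟩
    have hiK : i ≤ s.sup id := Finset.le_sup (f := id) hi
    refine (nbhdR_inter_nbhdR_subset_closedBall hd ht₀ (by omega) (by omega) R).trans
      (closedBall_subset_closedBall ?_)
    push_cast
    gcongr
  · rintro ⟨s, hs⟩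
    set K : ℕ := s.sup id + 1
    refine not_isBounded_arayX (k := K) (by omega) ((hs K (by positivity)).subset ?_)
    refine subset_iInter₂ fun i hi => ?_
    have hiK : i + 1 ≤ K := by simpa [K] using Finset.le_sup (f := id) hi
    exact (arayX_subset_nbhdR (by omega) hiK).trans
      (nbhdR_mono _ (sub_le_self _ (Nat.cast_nonneg _)))
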